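/- Let Ω ⊂ ℂ^n be a bounded open set, let 0 < ε ≤ 2 and C > 0, and let μ be a finite Borel measure on Ω with μ(B(z,r) ∩ Ω) ≤ C r^{2n−2+ε} for all z ∈ cl(Ω) and all 0 < r < 1. Let ε₁ ∈ (0, ε/2) and let ν be a Borel measure on Ω with M := ∫_Ω dist(ξ, ∂Ω)^{3+ε₁} dν(ξ) < ∞. For 0 < δ < 1 set δ₁ := (1/2) δ^{1/2 + 3/ε} and Ω_δ := {z ∈ Ω : dist(z, ∂Ω) > δ}. Then there is a constant C' > 0, depending only on n, ε, ε₁ and C, such that ∫_{Ω_δ} [ δ₁^{−2n} ∫_0^{δ₁} r^{2n−1} ( ∫_0^r t^{1−2n} ν(B(z,t)) dt ) dr ] dμ(z) ≤ C' M δ^{ε/2 − ε₁}. -/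

import Mathlib

/-!
Averaging in `r` costs nothing: the inner function `r ↦ ∫_0^r t^{1-2n} ν(B(z,t)) dt` is increasing,
so its `r^{2n-1}`-average over `(0, δ₁]` is at most its value at `δ₁`. For `z ∈ Ω_δ` and
`t ≤ δ₁ ≤ δ/2` every point of `B(z,t)` lies at distance at least `δ/2` from `∂Ω`, hence
`ν(B(z,t)) ≤ (δ/2)^{-(3+ε₁)} σ(B(z,t))` for the measure `σ = dist(·,∂Ω)^{3+ε₁} ν` on `Ω`, of total
mass `M`. By Tonelli, `∫_{Ω_δ} σ(B(z,t)) dμ(z) = ∫ μ(B(ξ,t) ∩ Ω_δ) dσ(ξ) ≤ C t^{2n-2+ε} M`, and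
`∫_0^{δ₁} t^{ε-1} dt = δ₁^ε/ε`; the choice `δ₁ = δ^{1/2+3/ε}/2` turns `δ₁^ε δ^{-(3+ε₁)}` into a
multiple of `δ^{ε/2-ε₁}`.
-/

open MeasureTheory
open scoped ENNReal

/-- The Borel σ-algebra on `ℂⁿ` (with its Euclidean norm). -/
noncomputable instance (n : ℕ) : MeasurableSpace (EuclideanSpace ℂ (Fin n)) := WithLp.measurableSpace 2 _

instance (n : ℕ) : BorelSpace (EuclideanSpace ℂ (Fin n)) := PiLp.borelSpace 2

open Metric Set

theorem IsOpen.ball_infDist_frontier_subset {E : Type*} [NormedAddCommGroup E] [NormedSpace ℝ E]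
    {U : Set E} (hU : IsOpen U) {x : E} (hx : x ∈ U) : ball x (infDist x (frontier U)) ⊆ U := by
  rcases (infDist_nonneg (x := x) (s := frontier U)).eq_or_lt with h | h
  · simp [← h]
  refine (convex_ball _ _).isPreconnected.subset_of_closure_inter_subset hU
    ⟨x, mem_ball_self h, hx⟩ fun y ⟨hyU, hyB⟩ => ?_
  by_contra hy
  refine disjoint_left.1 disjoint_ball_infDist hyB ⟨hyU, ?_⟩
  rwa [hU.interior_eq]

theorem setLIntegral_Ioc_rpow_sub_one {a s : ℝ} (ha : 0 ≤ a) (hs : 0 < s) :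
    ∫⁻ t in Ioc 0 a, ENNReal.ofReal (t ^ (s - 1)) = ENNReal.ofReal (a ^ s / s) := by
  have hs' : -1 < s - 1 := by linarith
  have hint : IntegrableOn (fun t : ℝ => t ^ (s - 1)) (Ioc 0 a) :=
    (intervalIntegrable_iff_integrableOn_Ioc_of_le ha).1
      (intervalIntegral.intervalIntegrable_rpow' hs')
  rw [← ofReal_integral_eq_lintegral_ofReal hint
    ((ae_restrict_iff' measurableSet_Ioc).2 (ae_of_all _ fun t ht => Real.rpow_nonneg ht.1.le _)),
    ← intervalIntegral.integral_of_le ha, integral_rpow (Or.inl hs'), sub_add_cancel,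
    Real.zero_rpow hs.ne', sub_zero]

section BallMeasures

variable {X : Type*} [PseudoMetricSpace X] [MeasurableSpace X] [OpensMeasurableSpace X]
  [SecondCountableTopology X]

theorem measurable_measure_ball (σ : Measure X) [SFinite σ] :
    Measurable fun p : X × ℝ => σ (ball p.1 p.2) :=
  measurable_measure_prodMk_left <|
    (isOpen_lt (continuous_dist.comp (continuous_snd.prodMk continuous_fst.fst))
      continuous_fst.snd).measurableSet

theorem lintegral_measure_ball_comm (μ σ : Measure X) [SFinite μ] [SFinite σ] (t : ℝ) :
    ∫⁻ z, σ (ball z t) ∂μ = ∫⁻ ξ, μ (ball ξ t) ∂σ := by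
  have hs : MeasurableSet {p : X × X | dist p.2 p.1 < t} :=
    (isOpen_lt (continuous_snd.dist continuous_fst) continuous_const).measurableSet
  calc ∫⁻ z, σ (ball z t) ∂μ = μ.prod σ {p | dist p.2 p.1 < t} := (Measure.prod_apply hs).symm
    _ = ∫⁻ ξ, μ (ball ξ t) ∂σ := by
        rw [Measure.prod_apply_symm hs]
        exact lintegral_congr fun ξ => congrArg μ <| Set.ext fun z => by
          rw [mem_ball, dist_comm]
          rfl

theorem lintegral_setLIntegral_rpow_mul_measure_ball_le (μ σ : Measure X) [SFinite μ]
    [SFinite σ] {a s ε C : ℝ} (ha : 0 ≤ a) (hε : 0 < ε) (hC : 0 ≤ C)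
    (hμ : ∀ᵐ ξ ∂σ, ∀ t ∈ Ioc 0 a, μ (ball ξ t) ≤ ENNReal.ofReal (C * t ^ (s - 2 + ε))) :
    ∫⁻ z, ∫⁻ t in Ioc 0 a, ENNReal.ofReal (t ^ (1 - s)) * σ (ball z t) ∂volume ∂μ
      ≤ ENNReal.ofReal (C * (a ^ ε / ε)) * σ univ := by
  have hmeas : Measurable (Function.uncurry fun (z : X) (t : ℝ) =>
      ENNReal.ofReal (t ^ (1 - s)) * σ (ball z t)) :=
    (ENNReal.measurable_ofReal.comp (measurable_id.pow_const _)).comp measurable_snd |>.mul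
      (measurable_measure_ball σ)
  have hball : ∀ t ∈ Ioc 0 a,
      ∫⁻ z, σ (ball z t) ∂μ ≤ ENNReal.ofReal (C * t ^ (s - 2 + ε)) * σ univ := by
    intro t ht
    rw [lintegral_measure_ball_comm, ← lintegral_const]
    exact lintegral_mono_ae (hμ.mono fun ξ hξ => hξ t ht)
  have hpow : EqOn
      (fun t => ENNReal.ofReal (t ^ (1 - s)) * (ENNReal.ofReal (C * t ^ (s - 2 + ε)) * σ univ))
      (fun t => ENNReal.ofReal C * σ univ * ENNReal.ofReal (t ^ (ε - 1))) (Ioc 0 a) := by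
    intro t ht
    calc ENNReal.ofReal (t ^ (1 - s)) * (ENNReal.ofReal (C * t ^ (s - 2 + ε)) * σ univ)
        = ENNReal.ofReal C * σ univ * ENNReal.ofReal (t ^ (1 - s) * t ^ (s - 2 + ε)) := by
          rw [ENNReal.ofReal_mul hC, ENNReal.ofReal_mul (Real.rpow_nonneg ht.1.le _)]
          ring
      _ = ENNReal.ofReal C * σ univ * ENNReal.ofReal (t ^ (ε - 1)) := by
          rw [← Real.rpow_add ht.1, show 1 - s + (s - 2 + ε) = ε - 1 by ring]
  calc ∫⁻ z, ∫⁻ t in Ioc 0 a, ENNReal.ofReal (t ^ (1 - s)) * σ (ball z t) ∂volume ∂μ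
      = ∫⁻ t in Ioc 0 a, ENNReal.ofReal (t ^ (1 - s)) * ∫⁻ z, σ (ball z t) ∂μ := by
        rw [lintegral_lintegral_swap hmeas.aemeasurable]
        simp_rw [lintegral_const_mul' _ _ ENNReal.ofReal_ne_top]
    _ ≤ ∫⁻ t in Ioc 0 a, ENNReal.ofReal (t ^ (1 - s)) *
          (ENNReal.ofReal (C * t ^ (s - 2 + ε)) * σ univ) :=
        setLIntegral_mono' measurableSet_Ioc fun t ht => mul_le_mul_right (hball t ht) _
    _ = ENNReal.ofReal C * σ univ * ∫⁻ t in Ioc 0 a, ENNReal.ofReal (t ^ (ε - 1)) := by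
        rw [setLIntegral_congr_fun measurableSet_Ioc hpow, lintegral_const_mul _
          (measurable_id'.pow_const _).ennreal_ofReal]
    _ = ENNReal.ofReal (C * (a ^ ε / ε)) * σ univ := by
        rw [setLIntegral_Ioc_rpow_sub_one ha hε, ENNReal.ofReal_mul hC]
        ring

end BallMeasures

section FrontierWeight

variable {E : Type*} [NormedAddCommGroup E] [MeasurableSpace E]

noncomputable def frontierWeightedMeasure (ν : Measure E) (Ω : Set E) (p : ℝ) : Measure E :=
  (ν.restrict Ω).withDensity fun ξ => ENNReal.ofReal (infDist ξ (frontier Ω) ^ p)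

variable {ν : Measure E} {Ω : Set E} {p : ℝ}

theorem frontierWeightedMeasure_univ (ν : Measure E) (Ω : Set E) (p : ℝ) :
    frontierWeightedMeasure ν Ω p univ
      = ∫⁻ ξ in Ω, ENNReal.ofReal (infDist ξ (frontier Ω) ^ p) ∂ν := by
  rw [frontierWeightedMeasure, withDensity_apply _ MeasurableSet.univ, Measure.restrict_univ]

theorem ae_mem_frontierWeightedMeasure (hΩ : MeasurableSet Ω) :
    ∀ᵐ ξ ∂frontierWeightedMeasure ν Ω p, ξ ∈ Ω :=
  (withDensity_absolutelyContinuous _ _).ae_le (ae_restrict_mem hΩ)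

theorem measure_ball_le_frontierWeightedMeasure [NormedSpace ℝ E] [OpensMeasurableSpace E]
    (hΩ : IsOpen Ω) (hp : 0 ≤ p) {z : E} (hz : z ∈ Ω) {a t : ℝ} (ha : 0 < a)
    (hat : a + t ≤ infDist z (frontier Ω)) :
    ν (ball z t) ≤ ENNReal.ofReal (a ^ (-p)) * frontierWeightedMeasure ν Ω p (ball z t) := by
  have hsub : ball z t ⊆ Ω :=
    (ball_subset_ball (by linarith)).trans (hΩ.ball_infDist_frontier_subset hz)
  have hfar : ∀ ξ ∈ ball z t, a ≤ infDist ξ (frontier Ω) := fun ξ hξ => by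
    have := infDist_le_infDist_add_dist (x := z) (y := ξ) (s := frontier Ω)
    rw [mem_ball'] at hξ
    linarith
  have hlow : ENNReal.ofReal (a ^ p) * ν (ball z t) ≤ frontierWeightedMeasure ν Ω p (ball z t) := by
    rw [frontierWeightedMeasure, withDensity_apply _ measurableSet_ball,
      Measure.restrict_restrict measurableSet_ball, inter_eq_left.2 hsub, ← setLIntegral_const]
    exact setLIntegral_mono ((continuous_infDist_pt _).measurable.pow_const p).ennreal_ofReal
      fun ξ hξ => ENNReal.ofReal_le_ofReal (Real.rpow_le_rpow ha.le (hfar ξ hξ) hp)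
  calc ν (ball z t) = ENNReal.ofReal (a ^ (-p)) * (ENNReal.ofReal (a ^ p) * ν (ball z t)) := by
        rw [← mul_assoc, ← ENNReal.ofReal_mul (by positivity), Real.rpow_neg ha.le,
          inv_mul_cancel₀ (by positivity), ENNReal.ofReal_one, one_mul]
    _ ≤ _ := mul_le_mul_right hlow _

end FrontierWeight

theorem rpow_neg_mul_setLIntegral_rpow_sub_one_mul_le {G : ℝ → ℝ≥0∞} (hG : Monotone G) {a q : ℝ}
    (ha : 0 < a) (hq : 1 ≤ q) :
    ENNReal.ofReal (a ^ (-q)) * ∫⁻ r in Ioc 0 a, ENNReal.ofReal (r ^ (q - 1)) * G r ≤ G a :=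
  calc ENNReal.ofReal (a ^ (-q)) * ∫⁻ r in Ioc 0 a, ENNReal.ofReal (r ^ (q - 1)) * G r
      ≤ ENNReal.ofReal (a ^ (-q)) * ∫⁻ _ in Ioc 0 a, ENNReal.ofReal (a ^ (q - 1)) * G a := by
        refine mul_le_mul_right (setLIntegral_mono' measurableSet_Ioc fun r hr => mul_le_mul'
            (ENNReal.ofReal_le_ofReal (Real.rpow_le_rpow hr.1.le hr.2 (by linarith))) (hG hr.2)) _
    _ = ENNReal.ofReal (a ^ (-q) * a ^ (q - 1) * a) * G a := by
        rw [setLIntegral_const, Real.volume_Ioc, sub_zero, ENNReal.ofReal_mul (by positivity),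
          ENNReal.ofReal_mul (by positivity)]
        ring
    _ = G a := by
        rw [← Real.rpow_add ha, show -q + (q - 1) = -1 by ring, Real.rpow_neg_one,
          inv_mul_cancel₀ ha.ne', ENNReal.ofReal_one, one_mul]

theorem half_mul_rpow_le_half {δ ε : ℝ} (hδ0 : 0 < δ) (hδ1 : δ ≤ 1) (hε0 : 0 < ε) (hε2 : ε ≤ 2) :
    1 / 2 * δ ^ (1 / 2 + 3 / ε) ≤ δ / 2 := by
  have h : 1 ≤ 1 / 2 + 3 / ε := by
    have : (3 : ℝ) / 2 ≤ 3 / ε := div_le_div_of_nonneg_left (by norm_num) hε0 hε2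
    linarith
  have := Real.rpow_le_rpow_of_exponent_ge hδ0 hδ1 h
  rw [Real.rpow_one] at this
  linarith

theorem half_mul_rpow_rpow_mul_half_rpow_neg {δ ε : ℝ} (hδ : 0 < δ) (hε : ε ≠ 0) (ε₁ : ℝ) :
    (1 / 2 * δ ^ (1 / 2 + 3 / ε)) ^ ε * (δ / 2) ^ (-(3 + ε₁))
      = 2 ^ (3 + ε₁ - ε) * δ ^ (ε / 2 - ε₁) := by
  have hexp : (1 / 2 + 3 / ε) * ε = ε / 2 + 3 := by field_simp
  rw [Real.mul_rpow (by norm_num) (by positivity), ← Real.rpow_mul hδ.le, hexp,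
    Real.div_rpow hδ.le zero_le_two, one_div, Real.inv_rpow zero_le_two,
    Real.rpow_neg zero_le_two, Real.rpow_sub two_pos,
    show ε / 2 - ε₁ = ε / 2 + 3 + -(3 + ε₁) by ring, Real.rpow_add hδ (ε / 2 + 3)]
  field_simp

theorem stmt_9_general (n : ℕ) (hn : 0 < n) (Ω : Set (EuclideanSpace ℂ (Fin n)))
    (hΩopen : IsOpen Ω)
    (ε C : ℝ) (hε0 : 0 < ε) (hε2 : ε ≤ 2) (hC : 0 < C)
    (μ : Measure (EuclideanSpace ℂ (Fin n))) [IsFiniteMeasure μ]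
    (hμ : ∀ z ∈ closure Ω, ∀ r : ℝ, 0 < r → r < 1 →
      μ (Metric.ball z r ∩ Ω) ≤ ENNReal.ofReal (C * r ^ (2 * (n : ℝ) - 2 + ε)))
    (ε₁ : ℝ) (hε₁0 : 0 < ε₁)
    (ν : Measure (EuclideanSpace ℂ (Fin n)))
    (M : ℝ≥0∞)
    (hM : M = ∫⁻ ξ in Ω,
      ENNReal.ofReal (Metric.infDist ξ (frontier Ω) ^ (3 + ε₁)) ∂ν)
    (hMfin : M ≠ ⊤) :
    ∃ C' : ℝ, 0 < C' ∧ ∀ δ : ℝ, 0 < δ → δ < 1 →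
      ∫⁻ z in {z ∈ Ω | δ < Metric.infDist z (frontier Ω)},
          ENNReal.ofReal ((1 / 2 * δ ^ (1 / 2 + 3 / ε)) ^ (-(2 * (n : ℝ)))) *
            ∫⁻ r in Set.Ioc (0 : ℝ) (1 / 2 * δ ^ (1 / 2 + 3 / ε)),
              ENNReal.ofReal (r ^ (2 * (n : ℝ) - 1)) *
                ∫⁻ t in Set.Ioc (0 : ℝ) r,
                  ENNReal.ofReal (t ^ (1 - 2 * (n : ℝ))) * ν (Metric.ball z t) ∂volume
              ∂volume ∂μ
        ≤ ENNReal.ofReal (C' * δ ^ (ε / 2 - ε₁)) * M := by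
  set σ := frontierWeightedMeasure ν Ω (3 + ε₁)
  have hσM : σ univ = M := by rw [hM, frontierWeightedMeasure_univ]
  have : IsFiniteMeasure σ := ⟨hσM ▸ hMfin.lt_top⟩
  refine ⟨C * 2 ^ (3 + ε₁ - ε) / ε, by positivity, fun δ hδ0 hδ1 => ?_⟩
  set δ₁ := 1 / 2 * δ ^ (1 / 2 + 3 / ε)
  set S := {z ∈ Ω | δ < infDist z (frontier Ω)}
  set c := ENNReal.ofReal ((δ / 2) ^ (-(3 + ε₁)))
  have hδ₁ : δ₁ ≤ δ / 2 := half_mul_rpow_le_half hδ0 hδ1.le hε0 hε2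
  have hS : MeasurableSet S :=
    (hΩopen.inter (isOpen_lt continuous_const (continuous_infDist_pt _))).measurableSet
  have hνσ : ∀ z ∈ S, ∀ t ∈ Ioc 0 δ₁, ν (ball z t) ≤ (c • σ) (ball z t) := fun z hz t ht =>
    measure_ball_le_frontierWeightedMeasure hΩopen (by positivity) hz.1 (by positivity)
      (by linarith [hz.2, ht.2])
  have hμS : ∀ᵐ ξ ∂(c • σ), ∀ t ∈ Ioc 0 δ₁,
      μ.restrict S (ball ξ t) ≤ ENNReal.ofReal (C * t ^ (2 * (n : ℝ) - 2 + ε)) :=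
    (Measure.ae_smul_measure (ae_mem_frontierWeightedMeasure hΩopen.measurableSet) c).mono
      fun ξ hξ t ht => (Measure.restrict_apply measurableSet_ball).trans_le <|
        (measure_mono (inter_subset_inter_right _ fun z hz => hz.1)).trans <|
          hμ ξ (subset_closure hξ) t ht.1 (by linarith [ht.2])
  calc _ ≤ ∫⁻ z in S, ∫⁻ t in Ioc 0 δ₁,
          ENNReal.ofReal (t ^ (1 - 2 * (n : ℝ))) * ν (ball z t) ∂volume ∂μ :=
        lintegral_mono fun z => rpow_neg_mul_setLIntegral_rpow_sub_one_mul_le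
          (fun r r' h => lintegral_mono_set (Ioc_subset_Ioc_right h)) (by positivity)
          (by norm_cast; omega)
    _ ≤ ∫⁻ z in S, ∫⁻ t in Ioc 0 δ₁,
          ENNReal.ofReal (t ^ (1 - 2 * (n : ℝ))) * (c • σ) (ball z t) ∂volume ∂μ :=
        setLIntegral_mono' hS fun z hz => setLIntegral_mono' measurableSet_Ioc fun t ht =>
          mul_le_mul_right (hνσ z hz t ht) _
    _ ≤ ENNReal.ofReal (C * (δ₁ ^ ε / ε)) * (c • σ) univ :=
        lintegral_setLIntegral_rpow_mul_measure_ball_le _ _ (by positivity) hε0 hC.le hμS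
    _ = ENNReal.ofReal (C * 2 ^ (3 + ε₁ - ε) / ε * δ ^ (ε / 2 - ε₁)) * M := by
        rw [Measure.smul_apply, smul_eq_mul, hσM, ← mul_assoc, ← ENNReal.ofReal_mul (by positivity),
          show C * (δ₁ ^ ε / ε) * (δ / 2) ^ (-(3 + ε₁)) = C / ε * (δ₁ ^ ε * (δ / 2) ^ (-(3 + ε₁)))
            by ring, half_mul_rpow_rpow_mul_half_rpow_neg hδ0 hε0.ne']
        congr 2
        ring

/-- Let `Ω ⊂ ℂⁿ` be a bounded open set, `0 < ε ≤ 2`, `C > 0`, `μ` a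
finite Borel measure with `μ(B(z,r) ∩ Ω) ≤ C r^{2n−2+ε}` for all `z ∈ closure Ω`,
`0 < r < 1`.  Let `ε₁ ∈ (0, ε/2)` and `ν` a Borel measure with
`M := ∫_Ω dist(ξ,∂Ω)^{3+ε₁} dν(ξ) < ∞`.  For `0 < δ < 1` set
`δ₁ := (1/2) δ^{1/2+3/ε}` and `Ω_δ := {z ∈ Ω : dist(z,∂Ω) > δ}`.  Then there is
`C' > 0`, depending only on `n, ε, ε₁, C`, with
`∫_{Ω_δ} [δ₁^{−2n} ∫_0^{δ₁} r^{2n−1} (∫_0^r t^{1−2n} ν(B(z,t)) dt) dr] dμ(z)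
  ≤ C' M δ^{ε/2−ε₁}`. -/
theorem stmt_9 (n : ℕ) (hn : 0 < n) (Ω : Set (EuclideanSpace ℂ (Fin n)))
    (hΩopen : IsOpen Ω) (hΩbdd : Bornology.IsBounded Ω)
    (ε C : ℝ) (hε0 : 0 < ε) (hε2 : ε ≤ 2) (hC : 0 < C)
    (μ : Measure (EuclideanSpace ℂ (Fin n))) [IsFiniteMeasure μ]
    (hμ : ∀ z ∈ closure Ω, ∀ r : ℝ, 0 < r → r < 1 →
      μ (Metric.ball z r ∩ Ω) ≤ ENNReal.ofReal (C * r ^ (2 * (n : ℝ) - 2 + ε)))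
    (ε₁ : ℝ) (hε₁0 : 0 < ε₁) (hε₁ : ε₁ < ε / 2)
    (ν : Measure (EuclideanSpace ℂ (Fin n)))
    (M : ℝ≥0∞)
    (hM : M = ∫⁻ ξ in Ω,
      ENNReal.ofReal (Metric.infDist ξ (frontier Ω) ^ (3 + ε₁)) ∂ν)
    (hMfin : M ≠ ⊤) :
    ∃ C' : ℝ, 0 < C' ∧ ∀ δ : ℝ, 0 < δ → δ < 1 →
      ∫⁻ z in {z ∈ Ω | δ < Metric.infDist z (frontier Ω)},
          ENNReal.ofReal ((1 / 2 * δ ^ (1 / 2 + 3 / ε)) ^ (-(2 * (n : ℝ)))) *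
            ∫⁻ r in Set.Ioc (0 : ℝ) (1 / 2 * δ ^ (1 / 2 + 3 / ε)),
              ENNReal.ofReal (r ^ (2 * (n : ℝ) - 1)) *
                ∫⁻ t in Set.Ioc (0 : ℝ) r,
                  ENNReal.ofReal (t ^ (1 - 2 * (n : ℝ))) * ν (Metric.ball z t) ∂volume
              ∂volume ∂μ
        ≤ ENNReal.ofReal (C' * δ ^ (ε / 2 - ε₁)) * M :=
  stmt_9_general n hn Ω hΩopen ε C hε0 hε2 hC μ hμ ε₁ hε₁0 ν M hM hMfin
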